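/- arXiv:2109.15137 — 2 statements merged into one kernel-verified Lean document; each statement's English description precedes it below -/
import Mathlib

section
/- Cauchy–Schwarz inequality for Clifford inner products: if (·,·) is an A_n-valued inner product on a unitary right A_n-module H with norm ‖f‖^2 = [(f,f)]_0 (the scalar part), then for all f, g ∈ H, |(f,g)| ≤ 2^n ‖f‖ ‖g‖, where |·| is the coefficient norm on A_n. -/
open MeasureTheory Finset Real

noncomputable section

/-- The real Clifford algebra `A_n`, modeled by coefficients over ordered multi-indices. -/
abbrev Cl (n : ℕ) := Finset (Fin n) → ℝ

/-- The standard basis element `e_A`. -/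
def basisE {n : ℕ} (A : Finset (Fin n)) : Cl n := fun B => if B = A then 1 else 0

/-- The unit element `e_∅ = 1`. -/
def cone (n : ℕ) : Cl n := basisE ∅

/-- The sign appearing in the product `e_A * e_B = csign A B • e_{A Δ B}`,
counting anticommutations and squares `e_j^2 = -1`. -/
def csign {n : ℕ} (A B : Finset (Fin n)) : ℝ :=
  (-1 : ℝ) ^ ((((A ×ˢ B).filter (fun p => p.2 < p.1)).card) + (A ∩ B).card)

/-- Clifford multiplication. -/
def cmul {n : ℕ} (x y : Cl n) : Cl n :=
  fun C => ∑ A : Finset (Fin n), ∑ B : Finset (Fin n),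
    if symmDiff A B = C then csign A B * x A * y B else 0

/-- Clifford conjugation: `conj (e_A) = (-1)^{|A|(|A|+1)/2} e_A`. -/
def cconj {n : ℕ} (x : Cl n) : Cl n :=
  fun A => (-1 : ℝ) ^ (A.card * (A.card + 1) / 2) * x A

/-- Squared coefficient norm `|x|^2 = Σ_A x_A^2`. -/
def cnormSq {n : ℕ} (x : Cl n) : ℝ := ∑ A : Finset (Fin n), (x A) ^ 2

/-- Coefficient norm. -/
def cnorm {n : ℕ} (x : Cl n) : ℝ := Real.sqrt (cnormSq x)

/-- Embedding of real scalars. -/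
def scal {n : ℕ} (r : ℝ) : Cl n := fun A => if A = ∅ then r else 0

/-- A Clifford number is vector-valued if it has components only in degrees 0 and 1. -/
def IsVector {n : ℕ} (u : Cl n) : Prop := ∀ A : Finset (Fin n), 2 ≤ A.card → u A = 0

/-- `ℝ^{n+1}` with the Euclidean structure. -/
abbrev Rn1 (n : ℕ) := EuclideanSpace ℝ (Fin (n + 1))

/-- Partial derivative `∂_j`. -/
def pder {n : ℕ} (j : Fin (n + 1)) (f : Rn1 n → ℝ) (x : Rn1 n) : ℝ :=
  fderiv ℝ f x (EuclideanSpace.single j 1)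

/-- The generators `e_0 = 1, e_1, ..., e_n`. -/
def egen {n : ℕ} (j : Fin (n + 1)) : Cl n :=
  if h : j = 0 then cone n else basisE {j.pred h}

/-- The Dirac operator `D u = Σ_j e_j ∂_j u`. -/
def Dirac {n : ℕ} (u : Rn1 n → Cl n) (x : Rn1 n) : Cl n :=
  ∑ j : Fin (n + 1), cmul (egen j) (fun A => pder j (fun y => u y A) x)

/-- The conjugate Dirac operator `conj(D) u = ∂_0 u - Σ_{j≥1} e_j ∂_j u`. -/
def DiracConj {n : ℕ} (u : Rn1 n → Cl n) (x : Rn1 n) : Cl n :=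
  ∑ j : Fin (n + 1), cmul (cconj (egen j)) (fun A => pder j (fun y => u y A) x)

/-- The Laplacian `Δ = Σ_j ∂_j^2`. -/
def lap {n : ℕ} (f : Rn1 n → ℝ) (x : Rn1 n) : ℝ :=
  ∑ j : Fin (n + 1), pder j (pder j f) x

/-- The weighted adjoint `D*_φ β = 2 β conj(D) φ - conj(D) β` acting on a real scalar
function `β`. -/
def Dstar {n : ℕ} (φ β : Rn1 n → ℝ) (x : Rn1 n) : Cl n :=
  (2 * β x) • DiracConj (fun y => scal (φ y)) x - DiracConj (fun y => scal (β y)) x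

/-- Left-monogenic (smooth and `Du = 0`). -/
def Monogenic {n : ℕ} (u : Rn1 n → Cl n) : Prop :=
  (∀ A : Finset (Fin n), ContDiff ℝ (⊤ : ℕ∞) (fun y => u y A)) ∧ ∀ x, Dirac u x = 0

/-- Membership in the generalized Bargmann–Fock space `F^2_φ(ℝ^{n+1}, A_n)`. -/
def MemFock {n : ℕ} (φ : Rn1 n → ℝ) (u : Rn1 n → Cl n) : Prop :=
  Monogenic u ∧ Integrable (fun x => cnormSq (u x) * Real.exp (-2 * φ x))

/-- Weighted `L^2` norm squared. -/
def fockNormSq {n : ℕ} (φ : Rn1 n → ℝ) (u : Rn1 n → Cl n) : ℝ :=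
  ∫ x, cnormSq (u x) * Real.exp (-2 * φ x)

/-- `B` is the reproducing (Bergman) kernel of `F^2_φ(ℝ^{n+1}, A_n)`. -/
def IsBergmanKernel {n : ℕ} (φ : Rn1 n → ℝ) (B : Rn1 n → Rn1 n → Cl n) : Prop :=
  (∀ x, MemFock φ (fun y => B y x)) ∧
  ∀ u, MemFock φ u → ∀ x,
    u x = ∫ y, Real.exp (-2 * φ y) • cmul (cconj (B y x)) (u y)

/-- Weak solution of `Du = f` on `Ω` (the Dirac operator taken distributionally). -/
def IsWeakSolution {n : ℕ} (Ω : Set (Rn1 n)) (u f : Rn1 n → Cl n) : Prop :=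
  ∀ α : Rn1 n → ℝ, ContDiff ℝ (⊤ : ℕ∞) α → HasCompactSupport α → tsupport α ⊆ Ω →
    ∫ x in Ω, α x • f x = - ∫ x in Ω, cmul (Dirac (fun y => scal (α y)) x) (u x)

/-- A unitary right `A_n`-module equipped with an `A_n`-valued inner product. -/
structure CliffordModuleInner (n : ℕ) (H : Type) [AddCommGroup H] where
  smul : H → Cl n → H
  inner : H → H → Cl n
  add_smul : ∀ f g a, smul (f + g) a = smul f a + smul g a
  smul_add : ∀ f a b, smul f (a + b) = smul f a + smul f b
  smul_mul : ∀ f a b, smul f (cmul a b) = smul (smul f a) b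
  smul_one : ∀ f, smul f (cone n) = f
  inner_add_right : ∀ f g h, inner f (g + h) = inner f g + inner f h
  inner_smul_right : ∀ f g a, inner f (smul g a) = cmul (inner f g) a
  inner_conj_symm : ∀ f g, inner f g = cconj (inner g f)
  inner_self_nonneg : ∀ f, 0 ≤ inner f f ∅
  inner_self_eq_zero : ∀ f, inner f f ∅ = 0 → f = 0
  inner_smul_self_le : ∀ f a, inner (smul f a) (smul f a) ∅ ≤ cnormSq a * inner f f ∅


lemma csign_sq {n : ℕ} (A B : Finset (Fin n)) : csign A B ^ 2 = 1 := by
  unfold csign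
  rw [← pow_mul, mul_comm, pow_mul]
  norm_num

lemma cmul_basisE_empty {n : ℕ} (x : Cl n) (A : Finset (Fin n)) :
    cmul x (basisE A) ∅ = csign A A * x A := by
  unfold cmul basisE
  have h1 : ∀ A' : Finset (Fin n),
      (∑ B : Finset (Fin n), if symmDiff A' B = ∅ then
        csign A' B * x A' * (if B = A then (1:ℝ) else 0) else 0)
      = if A' = A then csign A A * x A else 0 := by
    intro A'
    rw [Finset.sum_eq_single A]
    · by_cases h : A' = A
      · subst h; simp [symmDiff_self]
      · have : symmDiff A' A ≠ ∅ := by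
          intro hs
          exact h (symmDiff_eq_bot.mp hs)
        simp [this, h]
    · intro b _ hb; simp [hb]
    · simp
  simp only [h1]
  simp

lemma cmul_scal_empty {n : ℕ} (x : Cl n) (t : ℝ) :
    cmul x (scal t) ∅ = x ∅ * t := by
  have h : (scal t : Cl n) = fun B => t * basisE (∅ : Finset (Fin n)) B := by
    funext B; simp [scal, basisE]
  rw [h]
  unfold cmul
  have h2 : ∀ A' B : Finset (Fin n),
      (if symmDiff A' B = ∅ then csign A' B * x A' * (t * basisE ∅ B) else 0)
      = t * (if symmDiff A' B = ∅ then csign A' B * x A' * basisE ∅ B else 0) := by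
    intro A' B; by_cases hc : symmDiff A' B = ∅ <;> simp [hc] <;> ring
  simp only [h2, ← Finset.mul_sum]
  have h3 := cmul_basisE_empty x (∅ : Finset (Fin n))
  unfold cmul at h3
  rw [h3]
  simp [csign]
  ring

lemma cnormSq_basisE {n : ℕ} (A : Finset (Fin n)) : cnormSq (basisE A) = 1 := by
  unfold cnormSq basisE
  rw [Finset.sum_eq_single A] <;> simp +contextual

section Bform

variable {n : ℕ} {H : Type} [AddCommGroup H] (P : CliffordModuleInner n H)

lemma B_symm (f g : H) : P.inner f g ∅ = P.inner g f ∅ := by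
  rw [P.inner_conj_symm f g]; simp [cconj]

lemma B_add_right (f g h : H) :
    P.inner f (g + h) ∅ = P.inner f g ∅ + P.inner f h ∅ := by
  rw [P.inner_add_right]; rfl

lemma B_scal_right (f g : H) (t : ℝ) :
    P.inner f (P.smul g (scal t)) ∅ = P.inner f g ∅ * t := by
  rw [P.inner_smul_right, cmul_scal_empty]

lemma B_cauchy (f g : H) :
    (P.inner f g ∅) ^ 2 ≤ P.inner f f ∅ * P.inner g g ∅ := by
  set a := P.inner g g ∅ with ha
  set b := P.inner f g ∅ with hb
  set c := P.inner f f ∅ with hc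
  have key : ∀ t : ℝ, 0 ≤ a * (t * t) + (2 * b) * t + c := by
    intro t
    have h0 := P.inner_self_nonneg (f + P.smul g (scal t))
    have e1 : P.inner (f + P.smul g (scal t)) (f + P.smul g (scal t)) ∅
        = a * (t * t) + (2 * b) * t + c := by
      rw [B_add_right, B_symm P (f + P.smul g (scal t)) f, B_add_right, B_scal_right,
        B_scal_right P (f + P.smul g (scal t)) g t, B_symm P (f + P.smul g (scal t)) g,
        B_add_right, B_scal_right, B_symm P g f]
      ring
    linarith [e1 ▸ h0]
  have hd := discrim_le_zero key
  rw [discrim] at hd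
  nlinarith
end Bform

/-- Cauchy–Schwarz inequality for Clifford inner products:
`|(f,g)| ≤ 2^n ‖f‖ ‖g‖` where `‖f‖^2 = [(f,f)]_0`. -/
theorem stmt4 (n : ℕ) (H : Type) [AddCommGroup H] (P : CliffordModuleInner n H)
    (f g : H) :
    cnorm (P.inner f g) ≤
      2 ^ n * Real.sqrt (P.inner f f ∅) * Real.sqrt (P.inner g g ∅) :=  by
  have hff := P.inner_self_nonneg f
  have hgg := P.inner_self_nonneg g
  have coeff : ∀ A : Finset (Fin n),
      (P.inner f g A) ^ 2 ≤ P.inner f f ∅ * P.inner g g ∅ := by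
    intro A
    have h1 : P.inner f (P.smul g (basisE A)) ∅ = csign A A * P.inner f g A := by
      rw [P.inner_smul_right, cmul_basisE_empty]
    have h2 := B_cauchy P f (P.smul g (basisE A))
    rw [h1] at h2
    have h3 := P.inner_smul_self_le g (basisE A)
    rw [cnormSq_basisE] at h3
    have h4 : (csign A A * P.inner f g A) ^ 2 = (P.inner f g A) ^ 2 := by
      rw [mul_pow, csign_sq, one_mul]
    rw [h4] at h2
    nlinarith
  have hsum : cnormSq (P.inner f g) ≤ 2 ^ n * (P.inner f f ∅ * P.inner g g ∅) := by
    unfold cnormSq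
    calc ∑ A : Finset (Fin n), (P.inner f g A) ^ 2
        ≤ ∑ _A : Finset (Fin n), P.inner f f ∅ * P.inner g g ∅ :=
          Finset.sum_le_sum (fun A _ => coeff A)
      _ = 2 ^ n * (P.inner f f ∅ * P.inner g g ∅) := by
          rw [Finset.sum_const, Finset.card_univ, Fintype.card_finset, Fintype.card_fin]
          simp [nsmul_eq_mul]
  have h5 : cnorm (P.inner f g) ≤ Real.sqrt (2 ^ n * (P.inner f f ∅ * P.inner g g ∅)) := by
    exact Real.sqrt_le_sqrt hsum
  calc cnorm (P.inner f g)
      ≤ Real.sqrt (2 ^ n * (P.inner f f ∅ * P.inner g g ∅)) := h5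
    _ = Real.sqrt (2 ^ n) * (Real.sqrt (P.inner f f ∅) * Real.sqrt (P.inner g g ∅)) := by
        rw [Real.sqrt_mul (by positivity), Real.sqrt_mul hff]
    _ ≤ 2 ^ n * (Real.sqrt (P.inner f f ∅) * Real.sqrt (P.inner g g ∅)) := by
        have hle : Real.sqrt (2 ^ n) ≤ 2 ^ n := by
          have h1 : (1:ℝ) ≤ 2 ^ n := one_le_pow₀ (by norm_num)
          nlinarith [Real.sq_sqrt (by positivity : (0:ℝ) ≤ 2^n),
            Real.sqrt_nonneg ((2:ℝ)^n), Real.sqrt_le_sqrt h1, Real.sqrt_one]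
        exact mul_le_mul_of_nonneg_right hle (by positivity)
    _ = 2 ^ n * Real.sqrt (P.inner f f ∅) * Real.sqrt (P.inner g g ∅) := by ring


end
end

section
/- Weighted Bochner-type identity for the adjoint Dirac operator: for φ ∈ C^2(Ω, ℝ) and any real α ∈ C_0^∞(Ω, ℝ), one has ‖D*_φ α‖_φ^2 = ‖conj(D) α‖_φ^2 + ∫_Ω |α(x)|^2 Δ(2φ(x)) e^{-2φ(x)} dx, where ‖f‖_φ^2 = ∫_Ω |f|^2 e^{-2φ} dx. -/
open MeasureTheory Finset Real

noncomputable section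

section Aux


lemma csign_empty_right {n : ℕ} (A : Finset (Fin n)) : csign A ∅ = 1 := by
  simp [csign]

lemma cmul_scal_right {n : ℕ} (x : Cl n) (r : ℝ) : cmul x (scal r) = r • x := by
  funext C
  unfold cmul scal
  rw [Finset.sum_comm]
  rw [Finset.sum_eq_single (∅ : Finset (Fin n))]
  · have hsd : ∀ A : Finset (Fin n), symmDiff A ∅ = A := fun A => by
      rw [← Finset.bot_eq_empty, symmDiff_bot]
    simp only [hsd, csign_empty_right, one_mul, if_pos]
    rw [Finset.sum_ite_eq' Finset.univ C (fun A => x A * r)]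
    simp [mul_comm]
  · intro B _ hB
    simp [hB]
  · simp

def iotaF {n : ℕ} (j : Fin (n+1)) : Finset (Fin n) := if h : j = 0 then ∅ else {j.pred h}
def epsF {n : ℕ} (j : Fin (n+1)) : ℝ := if j = 0 then 1 else -1

lemma iotaF_inj {n : ℕ} : Function.Injective (iotaF (n := n)) := by
  intro j k h
  unfold iotaF at h
  split_ifs at h with h1 h2 h2
  · rw [h1, h2]
  · exact absurd h.symm (Finset.singleton_ne_empty _)
  · exact absurd h (Finset.singleton_ne_empty _)
  · rw [Finset.singleton_inj] at h
    have := congrArg Fin.succ h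
    rwa [Fin.succ_pred, Fin.succ_pred] at this

lemma cconj_egen {n : ℕ} (j : Fin (n+1)) :
    cconj (egen j) = fun A => epsF j * (if A = iotaF j then 1 else 0) := by
  funext A
  unfold cconj egen iotaF epsF cone basisE
  by_cases h : j = 0
  · simp only [dif_pos h, if_pos h]
    by_cases hA : A = (∅ : Finset (Fin n)) <;> simp [hA]
  · simp only [dif_neg h, if_neg h]
    by_cases hA : A = ({j.pred h} : Finset (Fin n)) <;> simp [hA]

lemma epsF_sq {n : ℕ} (j : Fin (n+1)) : epsF (n := n) j * epsF j = 1 := by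
  unfold epsF; split_ifs <;> norm_num

lemma cnormSq_sum {n : ℕ} (c : Fin (n+1) → ℝ) :
    cnormSq (∑ j, c j • cconj (egen (n := n) j)) = ∑ j, (c j)^2 := by
  unfold cnormSq
  have hA : ∀ A : Finset (Fin n), (∑ j, c j • cconj (egen j)) A
      = ∑ j, c j * epsF j * (if A = iotaF j then 1 else 0) := by
    intro A
    rw [Finset.sum_apply]
    refine Finset.sum_congr rfl fun j _ => ?_
    rw [Pi.smul_apply, cconj_egen, smul_eq_mul, mul_assoc]
  calc ∑ A : Finset (Fin n), ((∑ j, c j • cconj (egen j)) A)^2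
      = ∑ A : Finset (Fin n), ∑ j, ∑ k,
          (c j * epsF j * (if A = iotaF j then 1 else 0)) *
          (c k * epsF k * (if A = iotaF k then 1 else 0)) := by
        refine Finset.sum_congr rfl fun A _ => ?_
        rw [hA, sq, Finset.sum_mul_sum]
    _ = ∑ j, ∑ k, (c j * epsF j) * (c k * epsF k) *
          ∑ A : Finset (Fin n), ((if A = iotaF j then (1:ℝ) else 0) * (if A = iotaF k then 1 else 0)) := by
        rw [Finset.sum_comm]
        refine Finset.sum_congr rfl fun j _ => ?_
        rw [Finset.sum_comm]
        refine Finset.sum_congr rfl fun k _ => ?_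
        rw [Finset.mul_sum]
        refine Finset.sum_congr rfl fun A _ => ?_
        ring
    _ = ∑ j, ∑ k, (c j * epsF j) * (c k * epsF k) * (if iotaF (n := n) j = iotaF k then 1 else 0) := by
        refine Finset.sum_congr rfl fun j _ => Finset.sum_congr rfl fun k _ => ?_
        congr 1
        simp only [ite_mul, one_mul, zero_mul]
        rw [Finset.sum_ite_eq' Finset.univ (iotaF j) (fun A => if A = iotaF k then (1:ℝ) else 0)]
        simp [eq_comm]
    _ = ∑ j, (c j)^2 := by
        refine Finset.sum_congr rfl fun j _ => ?_
        have : ∀ k, (if iotaF (n := n) j = iotaF k then (1:ℝ) else 0) = if k = j then 1 else 0 := by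
          intro k
          by_cases h : k = j
          · simp [h]
          · rw [if_neg h, if_neg]
            intro hc
            exact h (iotaF_inj hc).symm
        simp only [this, mul_ite, mul_one, mul_zero]
        rw [Finset.sum_ite_eq' Finset.univ j (fun k => c j * epsF j * (c k * epsF k))]
        simp only [Finset.mem_univ, if_pos]
        have := epsF_sq (n := n) j
        ring_nf
        nlinarith [epsF_sq (n := n) j]

lemma pder_const {n : ℕ} (j : Fin (n+1)) (c : ℝ) (x : Rn1 n) : pder j (fun _ => c) x = 0 := by
  simp [pder]

lemma diracConj_scal {n : ℕ} (f : Rn1 n → ℝ) (x : Rn1 n) :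
    DiracConj (fun y => scal (f y)) x = ∑ j, pder j f x • cconj (egen j) := by
  unfold DiracConj
  refine Finset.sum_congr rfl fun j _ => ?_
  show cmul (cconj (egen j)) (fun A => pder j (fun y => scal (f y) A) x) = _
  have h : (fun A : Finset (Fin n) => pder j (fun y => scal (f y) A) x) = scal (pder j f x) := by
    funext A
    by_cases hA : A = (∅ : Finset (Fin n))
    · simp [scal, hA]
    · simp [scal, hA, pder_const]
  rw [h, cmul_scal_right]

lemma cnormSq_diracConj_scal {n : ℕ} (f : Rn1 n → ℝ) (x : Rn1 n) :
    cnormSq (DiracConj (fun y => scal (f y)) x) = ∑ j, (pder j f x)^2 := by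
  rw [diracConj_scal, cnormSq_sum]

lemma dstar_eq {n : ℕ} (φ α : Rn1 n → ℝ) (x : Rn1 n) :
    Dstar φ α x = ∑ j, (2 * α x * pder j φ x - pder j α x) • cconj (egen j) := by
  unfold Dstar
  rw [diracConj_scal, diracConj_scal, Finset.smul_sum, ← Finset.sum_sub_distrib]
  refine Finset.sum_congr rfl fun j _ => ?_
  rw [smul_smul, ← sub_smul, mul_assoc]

lemma cnormSq_dstar {n : ℕ} (φ α : Rn1 n → ℝ) (x : Rn1 n) :
    cnormSq (Dstar φ α x) = ∑ j, (2 * α x * pder j φ x - pder j α x)^2 := by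
  rw [dstar_eq, cnormSq_sum]


section Ana2
variable {n : ℕ} {j : Fin (n + 1)} {f g : Rn1 n → ℝ} {x : Rn1 n}

variable {n : ℕ} {j : Fin (n + 1)} {f g : Rn1 n → ℝ} {x : Rn1 n}

lemma contDiff_pder {m : WithTop ℕ∞} (hf : ContDiff ℝ (m + 1) f) (j : Fin (n+1)) :
    ContDiff ℝ m (pder j f) := by
  show ContDiff ℝ m fun x => (fderiv ℝ f x) (EuclideanSpace.single j 1)
  exact (hf.fderiv_right le_rfl).clm_apply contDiff_const

lemma continuous_pder (hf : ContDiff ℝ 1 f) (j : Fin (n+1)) :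
    Continuous (pder j f) := by
  have h := contDiff_pder (m := 0) (hf.of_le (by norm_num)) j
  exact h.continuous

lemma pder_eq_zero_of_not_mem_tsupport (hx : x ∉ tsupport f) : pder j f x = 0 := by
  have h := notMem_tsupport_iff_eventuallyEq.1 hx
  unfold pder
  rw [h.fderiv_eq, show (0 : Rn1 n → ℝ) = fun _ => (0:ℝ) from rfl, fderiv_fun_const]
  rfl

lemma pder_mul (hf : DifferentiableAt ℝ f x) (hg : DifferentiableAt ℝ g x) :
    pder j (fun y => f y * g y) x = pder j f x * g x + f x * pder j g x := by
  unfold pder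
  rw [fderiv_fun_mul hf hg]
  simp only [ContinuousLinearMap.add_apply, ContinuousLinearMap.coe_smul', Pi.smul_apply,
    smul_eq_mul]
  ring

lemma pder_exp_comp (hf : DifferentiableAt ℝ f x) :
    pder j (fun y => Real.exp (f y)) x = Real.exp (f x) * pder j f x := by
  unfold pder
  rw [(hf.hasFDerivAt.exp).fderiv]
  simp

lemma pder_const_mul (hf : DifferentiableAt ℝ f x) (c : ℝ) :
    pder j (fun y => c * f y) x = c * pder j f x := by
  unfold pder
  rw [fderiv_const_mul hf c]
  simp

lemma integral_pder_eq_zero (h : Rn1 n → ℝ) (hd : Differentiable ℝ h)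
    (hi : Integrable h) (hi' : Integrable (pder j h)) :
    ∫ x : Rn1 n, pder j h x = 0 := by
  have key := integral_mul_fderiv_eq_neg_fderiv_mul_of_integrable
    (μ := (volume : Measure (Rn1 n)))
    (f := fun _ : Rn1 n => (1:ℝ)) (g := h) (v := EuclideanSpace.single j 1)
    ?_ ?_ ?_ (fun x _ => differentiableAt_const 1) (fun x _ => hd x)
  · simpa [pder] using key
  · simpa [fderiv_fun_const] using (integrable_zero (Rn1 n) ℝ (volume : Measure (Rn1 n)))
  · have hi'' := hi'; unfold pder at hi''; simpa using hi''
  · simpa using hi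

lemma pder_h_eq (φ α : Rn1 n → ℝ) (hφ : ContDiff ℝ 2 φ) (hα : ContDiff ℝ 2 α)
    (j : Fin (n+1)) (x : Rn1 n) :
    pder j (fun y => pder j φ y * (α y * α y * Real.exp (-2 * φ y))) x =
      pder j (pder j φ) x * (α x * α x * Real.exp (-2 * φ x))
      + pder j φ x * ((pder j α x * α x + α x * pder j α x) * Real.exp (-2 * φ x)
          + (α x * α x) * (Real.exp (-2 * φ x) * (-2 * pder j φ x))) := by
  have hφd : Differentiable ℝ φ := hφ.differentiable (by norm_num)
  have hαd : Differentiable ℝ α := hα.differentiable (by norm_num)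
  have hpφd : DifferentiableAt ℝ (pder j φ) x :=
    ((contDiff_pder (m := 1) (hφ.of_le (by norm_num)) j).differentiable one_ne_zero) x
  have dψ : DifferentiableAt ℝ (fun y => Real.exp (-2 * φ y)) x :=
    ((hφd x).const_mul (-2)).exp
  have dαα : DifferentiableAt ℝ (fun y => α y * α y) x := (hαd x).mul (hαd x)
  rw [pder_mul hpφd (dαα.fun_mul dψ), pder_mul dαα dψ, pder_mul (hαd x) (hαd x),
    pder_exp_comp ((hφd x).const_mul (-2)), pder_const_mul (hφd x)]


end Ana2
end Aux

/-- Weighted Bochner-type identity: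
`‖D*_φ α‖_φ^2 = ‖conj(D) α‖_φ^2 + ∫_Ω |α|^2 Δ(2φ) e^{-2φ}` for real test functions `α`. -/
theorem stmt8 (n : ℕ) (Ω : Set (Rn1 n)) (hΩ : IsOpen Ω)
    (φ : Rn1 n → ℝ) (hφ : ContDiff ℝ 2 φ)
    (α : Rn1 n → ℝ) (hα : ContDiff ℝ (⊤ : ℕ∞) α) (hαc : HasCompactSupport α)
    (hαΩ : tsupport α ⊆ Ω) :
    ∫ x in Ω, cnormSq (Dstar φ α x) * Real.exp (-2 * φ x) =
      (∫ x in Ω, cnormSq (DiracConj (fun y => scal (α y)) x) * Real.exp (-2 * φ x)) +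
        ∫ x in Ω, (α x) ^ 2 * (2 * lap φ x) * Real.exp (-2 * φ x) := by
  classical
  have hα2 : ContDiff ℝ 2 α := hα.of_le (WithTop.coe_le_coe.mpr le_top)
  have hαd : Differentiable ℝ α := hα2.differentiable (by norm_num)
  have hφd : Differentiable ℝ φ := hφ.differentiable (by norm_num)
  have hαcont : Continuous α := hα2.continuous
  have hψ : ContDiff ℝ 2 fun y => Real.exp (-2 * φ y) :=
    (Real.contDiff_exp.of_le le_top).comp (contDiff_const.mul hφ)
  have hψd : Differentiable ℝ fun y => Real.exp (-2 * φ y) := hψ.differentiable (by norm_num)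
  have hψcont : Continuous fun y => Real.exp (-2 * φ y) := hψ.continuous
  have hpφ : ∀ j, ContDiff ℝ 1 (pder j φ) := fun j =>
    contDiff_pder (m := 1) (hφ.of_le (by norm_num)) j
  have hpφc : ∀ j, Continuous (pder j φ) := fun j => (hpφ j).continuous
  have hppφc : ∀ j, Continuous (pder j (pder j φ)) := fun j => continuous_pder (hpφ j) j
  have hpα : ∀ j, ContDiff ℝ 1 (pder j α) := fun j =>
    contDiff_pder (m := 1) (hα2.of_le (by norm_num)) j
  have hpαc : ∀ j, Continuous (pder j α) := fun j => (hpα j).continuous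
  -- vanishing outside the support
  have hz : ∀ x ∉ tsupport α, α x = 0 := fun x hx => image_eq_zero_of_notMem_tsupport hx
  have hzp : ∀ (j : Fin (n+1)) (x : Rn1 n), x ∉ tsupport α → pder j α x = 0 :=
    fun j x hx => pder_eq_zero_of_not_mem_tsupport hx
  -- the auxiliary functions h j
  have hh1 : ∀ j : Fin (n+1), ContDiff ℝ 1
      fun y => pder j φ y * (α y * α y * Real.exp (-2 * φ y)) := fun j =>
    (hpφ j).mul (((hα2.of_le one_le_two).mul (hα2.of_le one_le_two)).mul (hψ.of_le one_le_two))
  have hhd : ∀ j : Fin (n+1), Differentiable ℝ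
      fun y => pder j φ y * (α y * α y * Real.exp (-2 * φ y)) := fun j =>
    (hh1 j).differentiable one_ne_zero
  have hhc : ∀ j : Fin (n+1), Continuous
      fun y => pder j φ y * (α y * α y * Real.exp (-2 * φ y)) := fun j => (hh1 j).continuous
  have hh0 : ∀ (j : Fin (n+1)) (x : Rn1 n), x ∉ tsupport α →
      pder j φ x * (α x * α x * Real.exp (-2 * φ x)) = 0 := by
    intro j x hx; rw [hz x hx]; ring
  have hsub : ∀ j : Fin (n+1),
      tsupport (fun y => pder j φ y * (α y * α y * Real.exp (-2 * φ y))) ⊆ tsupport α := by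
    intro j
    apply closure_mono
    intro y hy
    simp only [Function.mem_support] at hy ⊢
    intro h0
    apply hy
    rw [h0]; ring
  have hRc : ∀ j : Fin (n+1), Continuous
      (pder j (fun y => pder j φ y * (α y * α y * Real.exp (-2 * φ y)))) := fun j =>
    continuous_pder (hh1 j) j
  have hR0 : ∀ (j : Fin (n+1)) (x : Rn1 n), x ∉ tsupport α →
      pder j (fun y => pder j φ y * (α y * α y * Real.exp (-2 * φ y))) x = 0 := by
    intro j x hx
    exact pder_eq_zero_of_not_mem_tsupport fun hm => hx (hsub j hm)
  have hhint : ∀ j : Fin (n+1), Integrable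
      (fun y => pder j φ y * (α y * α y * Real.exp (-2 * φ y))) := fun j =>
    (hhc j).integrable_of_hasCompactSupport (HasCompactSupport.intro hαc (hh0 j))
  have hRint : ∀ j : Fin (n+1), Integrable
      (pder j (fun y => pder j φ y * (α y * α y * Real.exp (-2 * φ y)))) := fun j =>
    (hRc j).integrable_of_hasCompactSupport (HasCompactSupport.intro hαc (hR0 j))
  have hRzero : ∀ j : Fin (n+1),
      ∫ x : Rn1 n, pder j (fun y => pder j φ y * (α y * α y * Real.exp (-2 * φ y))) x = 0 :=
    fun j => integral_pder_eq_zero _ (hhd j) (hhint j) (hRint j)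
  -- rewrite the Clifford quantities as sums of squares
  simp only [cnormSq_dstar, cnormSq_diracConj_scal, lap]
  -- convert set integrals to integrals over the whole space
  have hS0 : ∀ x ∉ Ω,
      (∑ j, (2 * α x * pder j φ x - pder j α x)^2) * Real.exp (-2 * φ x) = 0 := by
    intro x hx
    have hx' : x ∉ tsupport α := fun hm => hx (hαΩ hm)
    rw [Finset.sum_eq_zero fun j _ => by rw [hz x hx', hzp j x hx']; ring, zero_mul]
  have hT0 : ∀ x ∉ Ω, (∑ j, (pder j α x)^2) * Real.exp (-2 * φ x) = 0 := by
    intro x hx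
    have hx' : x ∉ tsupport α := fun hm => hx (hαΩ hm)
    rw [Finset.sum_eq_zero fun j _ => by rw [hzp j x hx']; ring, zero_mul]
  have hU0 : ∀ x ∉ Ω,
      (α x) ^ 2 * (2 * ∑ j, pder j (pder j φ) x) * Real.exp (-2 * φ x) = 0 := by
    intro x hx
    have hx' : x ∉ tsupport α := fun hm => hx (hαΩ hm)
    rw [hz x hx']; ring
  rw [setIntegral_eq_integral_of_forall_compl_eq_zero hS0,
    setIntegral_eq_integral_of_forall_compl_eq_zero hT0,
    setIntegral_eq_integral_of_forall_compl_eq_zero hU0]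
  -- the pointwise identity
  have key : ∀ x : Rn1 n,
      (∑ j, (2 * α x * pder j φ x - pder j α x)^2) * Real.exp (-2 * φ x) =
      (∑ j, (pder j α x)^2) * Real.exp (-2 * φ x)
        + (α x) ^ 2 * (2 * ∑ j, pder j (pder j φ) x) * Real.exp (-2 * φ x)
        - 2 * ∑ j, pder j (fun y => pder j φ y * (α y * α y * Real.exp (-2 * φ y))) x := by
    intro x
    simp only [Finset.sum_mul, Finset.mul_sum]
    rw [← Finset.sum_add_distrib, ← Finset.sum_sub_distrib]
    refine Finset.sum_congr rfl fun j _ => ?_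
    rw [pder_h_eq φ α hφ hα2 j x]
    ring
  rw [integral_congr_ae (Filter.Eventually.of_forall key)]
  -- integrability of the pieces
  have hTi : Integrable fun x : Rn1 n => (∑ j, (pder j α x)^2) * Real.exp (-2 * φ x) := by
    refine Continuous.integrable_of_hasCompactSupport ?_ (HasCompactSupport.intro hαc ?_)
    · exact (continuous_finset_sum _ fun j _ => (hpαc j).pow 2).mul hψcont
    · intro x hx
      rw [Finset.sum_eq_zero fun j _ => by rw [hzp j x hx]; ring, zero_mul]
  have hUi : Integrable fun x : Rn1 n =>
      (α x) ^ 2 * (2 * ∑ j, pder j (pder j φ) x) * Real.exp (-2 * φ x) := by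
    refine Continuous.integrable_of_hasCompactSupport ?_ (HasCompactSupport.intro hαc ?_)
    · exact ((hαcont.pow 2).mul
        (continuous_const.mul (continuous_finset_sum _ fun j _ => hppφc j))).mul hψcont
    · intro x hx
      rw [hz x hx]; ring
  have hWi : Integrable fun x : Rn1 n =>
      2 * ∑ j, pder j (fun y => pder j φ y * (α y * α y * Real.exp (-2 * φ y))) x := by
    exact (integrable_finset_sum _ fun j _ => hRint j).const_mul 2
  have hTU : Integrable fun x : Rn1 n =>
      (∑ j, (pder j α x)^2) * Real.exp (-2 * φ x)
        + (α x) ^ 2 * (2 * ∑ j, pder j (pder j φ) x) * Real.exp (-2 * φ x) := hTi.add hUi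
  rw [integral_sub hTU hWi, integral_add hTi hUi]
  have hWz : (∫ x : Rn1 n,
      2 * ∑ j, pder j (fun y => pder j φ y * (α y * α y * Real.exp (-2 * φ y))) x) = 0 := by
    rw [integral_const_mul, integral_finset_sum _ fun j _ => hRint j]
    simp only [hRzero]
    simp
  rw [hWz, sub_zero]


end
end
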